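/- The group of homomorphisms from SL(2,Z) to the nonzero complex numbers is cyclic of order 12, generated by the character χ satisfying χ(T) = e^{2πi/12} and χ(S) = e^{-2πi/4}, where T = [[1,1],[0,1]] and S = [[0,-1],[1,0]]. -/

import Mathlib

set_option autoImplicit false

open Matrix MatrixGroups Complex

/-!
In an abelian group the relations `S ^ 4 = 1` and `S ^ 2 = (S * T) ^ 3` of `SL(2,ℤ)` force
`φ S = (φ T ^ 3)⁻¹` and `φ T ^ 12 = 1`; since `S` and `T` generate, a character `φ` is determined
by the twelfth root of unity `φ T`. It remains to exhibit a character `χ` with `χ T` primitive.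
Its exponent is a polynomial in the matrix entries taken modulo `12`; that this polynomial is
additive on `SL(2,ℤ/4)` and on `SL(2,ℤ/3)` is a finite computation.
-/

namespace ModularGroup

lemma S_pow_four : S ^ 4 = 1 := by decide

lemma S_sq_eq_S_mul_T_pow_three : S ^ 2 = (S * T) ^ 3 := by decide

section CommGroup

variable {G : Type*} [CommGroup G]

lemma map_S_mul_map_T_pow_three (φ : SL(2,ℤ) →* G) : φ S * φ T ^ 3 = 1 := by
  have h := congrArg φ S_sq_eq_S_mul_T_pow_three
  rw [map_pow, map_pow, map_mul, mul_pow, pow_succ (φ S) 2, mul_assoc] at h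
  exact mul_eq_left.mp h.symm

lemma map_T_pow_twelve (φ : SL(2,ℤ) →* G) : φ T ^ 12 = 1 := by
  have h := congrArg φ S_pow_four
  rwa [map_pow, map_one, eq_inv_of_mul_eq_one_left (map_S_mul_map_T_pow_three φ), inv_pow,
    inv_eq_one, ← pow_mul] at h

lemma monoidHom_ext_of_map_T {φ ψ : SL(2,ℤ) →* G} (h : φ T = ψ T) : φ = ψ := by
  refine MonoidHom.eq_of_eqOn_dense SpecialLinearGroup.SL2Z_generators ?_
  rintro γ (rfl | rfl)
  · rw [eq_inv_of_mul_eq_one_left (map_S_mul_map_T_pow_three φ),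
      eq_inv_of_mul_eq_one_left (map_S_mul_map_T_pow_three ψ), h]
  · exact h

lemma eval_T_injective : Function.Injective (MonoidHom.eval T : (SL(2,ℤ) →* G) →* G) :=
  fun _ _ ↦ monoidHom_ext_of_map_T

end CommGroup

def chiPoly {R : Type*} [CommRing R] (a b c d : R) : R :=
  3*d + 9*d*d + 6*c + c*d + 9*c*d*d + 9*c*c + 9*c*c*d + b*d + 9*b*c + 9*b*c*d + 9*b*c*c
    + 8*b*c*c*d + a*c

lemma intCast_chiPoly {R : Type*} [CommRing R] (a b c d : ℤ) :
    ((chiPoly a b c d : ℤ) : R) = chiPoly (a : R) b c d := by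
  push_cast [chiPoly]
  rfl

def ChiPolyAdditive (R : Type*) [CommRing R] : Prop :=
  ∀ a b c d : R, a * d - b * c = 1 → ∀ e f g h : R, e * h - f * g = 1 →
    chiPoly (a * e + b * g) (a * f + b * h) (c * e + d * g) (c * f + d * h) =
      chiPoly a b c d + chiPoly e f g h

set_option maxRecDepth 10000 in
lemma chiPolyAdditive_zmod_four : ChiPolyAdditive (ZMod 4) := by
  unfold ChiPolyAdditive
  decide

set_option maxRecDepth 10000 in
lemma chiPolyAdditive_zmod_three : ChiPolyAdditive (ZMod 3) := by
  unfold ChiPolyAdditive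
  decide

def chiExponent (γ : SL(2,ℤ)) : ℤ := chiPoly (γ 0 0) (γ 0 1) (γ 1 0) (γ 1 1)

lemma chiExponent_mul_modEq_of_chiPolyAdditive {n : ℕ} (hn : ChiPolyAdditive (ZMod n))
    (A B : SL(2,ℤ)) : chiExponent (A * B) ≡ chiExponent A + chiExponent B [ZMOD n] := by
  have hdet (C : SL(2,ℤ)) : (((C : Matrix (Fin 2) (Fin 2) ℤ).det : ℤ) : ZMod n) = 1 := by
    rw [C.det_coe, Int.cast_one]
  have hAB (i j : Fin 2) : (A * B) i j = A i 0 * B 0 j + A i 1 * B 1 j :=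
    Fin.sum_univ_two fun k ↦ A i k * B k j
  rw [← ZMod.intCast_eq_intCast_iff]
  simp only [chiExponent, hAB]
  push_cast [intCast_chiPoly, det_fin_two] at hdet ⊢
  exact hn _ _ _ _ (hdet A) _ _ _ _ (hdet B)

lemma chiExponent_mul_modEq (A B : SL(2,ℤ)) :
    chiExponent (A * B) ≡ chiExponent A + chiExponent B [ZMOD 12] :=
  (Int.modEq_and_modEq_iff_modEq_mul (m := 4) (n := 3) (by norm_num)).mp
    ⟨chiExponent_mul_modEq_of_chiPolyAdditive chiPolyAdditive_zmod_four A B,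
      chiExponent_mul_modEq_of_chiPolyAdditive chiPolyAdditive_zmod_three A B⟩

lemma chiExponent_T : chiExponent T = 13 := by decide

lemma chiExponent_S : chiExponent S = -3 := by decide

noncomputable def zeta12 : ℂˣ := Units.mk0 (exp (2 * Real.pi * I / 12)) (exp_ne_zero _)

lemma isPrimitiveRoot_zeta12 : IsPrimitiveRoot zeta12 12 := by
  rw [← IsPrimitiveRoot.coe_units_iff, zeta12, Units.val_mk0]
  exact_mod_cast isPrimitiveRoot_exp 12 (by norm_num)

lemma orderOf_zeta12 : orderOf zeta12 = 12 := isPrimitiveRoot_zeta12.eq_orderOf.symm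

noncomputable def chi : SL(2,ℤ) →* ℂˣ :=
  MonoidHom.mk' (fun γ ↦ zeta12 ^ chiExponent γ) fun A B ↦ by
    rw [← _root_.zpow_add, zpow_eq_zpow_iff_modEq, orderOf_zeta12]
    exact chiExponent_mul_modEq A B

lemma chi_T : chi T = zeta12 := by
  rw [← zpow_one zeta12, chi, MonoidHom.mk'_apply, chiExponent_T, zpow_eq_zpow_iff_modEq,
    orderOf_zeta12]
  decide

lemma coe_chi_S : (chi S : ℂ) = exp (-(2 * Real.pi * I * (1 / 4))) := by
  rw [chi, MonoidHom.mk'_apply, chiExponent_S, Units.val_zpow_eq_zpow_val, zeta12,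
    Units.val_mk0, ← exp_int_mul]
  push_cast
  ring_nf

end ModularGroup

/-- The group `Hom(SL(2,ℤ), ℂˣ)` of characters of the modular group is cyclic of
order 12, generated by the character `χ` with `χ(T) = e^{2πi/12}` and
`χ(S) = e^{-2πi/4}`. -/
theorem characters_SL2Z_cyclic_order_twelve :
    ∃ χ : SL(2,ℤ) →* ℂˣ,
      (χ ModularGroup.T : ℂ) = Complex.exp (2 * (Real.pi) * I * (1 / 12)) ∧
      (χ ModularGroup.S : ℂ) = Complex.exp (-(2 * (Real.pi) * I * (1 / 4))) ∧
      orderOf χ = 12 ∧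
      ∀ φ : SL(2,ℤ) →* ℂˣ, φ ∈ Subgroup.zpowers χ := by
  open ModularGroup in
  have eval_T_chi : MonoidHom.eval T chi = zeta12 := chi_T
  refine ⟨chi, by rw [chi_T, zeta12, Units.val_mk0, mul_one_div], coe_chi_S, ?_, fun φ ↦ ?_⟩
  · rw [← orderOf_injective _ eval_T_injective, eval_T_chi, orderOf_zeta12]
  · rw [← Subgroup.mem_map_iff_mem eval_T_injective, MonoidHom.map_zpowers, eval_T_chi,
      isPrimitiveRoot_zeta12.zpowers_eq, _root_.mem_rootsOfUnity]
    exact map_T_pow_twelve φ
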